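/- arXiv:1612.04980 — 3 statements merged into one kernel-verified Lean document; each statement's English description precedes it below -/
import Mathlib

section
/- Let D be a nonempty finite digraph whose reachable fragments are R_1, …, R_p, and for each i let (P_i, org_i) be a valid DAG-depth decomposition of D[R_i] of depth d_i, where the DAGs P_i are pairwise disjoint. Then the disjoint union P of P_1, …, P_p together with the common extension org of the maps org_i is a valid DAG-depth decomposition of D of depth max_{1 ≤ i ≤ p} d_i. -/
open scoped Classical

noncomputable section

/-- A finite directed graph: a finite vertex set together with an adjacency
relation whose edges join vertices of the graph. -/
structure FinDigraph (α : Type) where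
  verts : Finset α
  Adj : α → α → Prop
  adj_mem : ∀ u v, Adj u v → u ∈ verts ∧ v ∈ verts

namespace FinDigraph

variable {α β : Type}

/-- The out-neighbourhood `N⁺_D(v)`. -/
def outNbhd (D : FinDigraph α) (v : α) : Set α := {u | D.Adj v u}

/-- The set of vertices reachable from `s` by a (possibly trivial) directed path. -/
def reachSet (D : FinDigraph α) (s : α) : Finset α :=
  D.verts.filter fun v => Relation.ReflTransGen D.Adj s v

/-- A reachable fragment: an inclusion-maximal set among the reachable sets. -/
def IsFragment (D : FinDigraph α) (R : Finset α) : Prop :=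
  (∃ s ∈ D.verts, R = D.reachSet s) ∧
  ∀ s ∈ D.verts, R ⊆ D.reachSet s → R = D.reachSet s

/-- The collection of all reachable fragments of `D`. -/
def fragments (D : FinDigraph α) : Finset (Finset α) :=
  D.verts.powerset.filter fun R => D.IsFragment R

/-- The induced subdigraph `D[S]`. -/
def induce (D : FinDigraph α) (S : Finset α) : FinDigraph α where
  verts := D.verts ∩ S
  Adj u v := D.Adj u v ∧ u ∈ S ∧ v ∈ S
  adj_mem := fun u v h => ⟨Finset.mem_inter.mpr ⟨(D.adj_mem u v h.1).1, h.2.1⟩,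
    Finset.mem_inter.mpr ⟨(D.adj_mem u v h.1).2, h.2.2⟩⟩

/-- Deletion of a vertex: `D − v = D[V(D) ∖ {v}]`. -/
def deleteVert (D : FinDigraph α) (v : α) : FinDigraph α :=
  D.induce (D.verts.erase v)

/-- Fuel-based helper for DAG-depth; the fuel `|V(D)|` always suffices since each
recursive call strictly decreases the number of vertices. -/
def ddpAux : ℕ → FinDigraph α → ℕ
  | 0, _ => 0
  | n+1, D =>
    if hcard : D.verts.card ≤ 1 then 1
    else if D.fragments.card = 1 then
      1 + D.verts.inf' (Finset.card_pos.mp (by omega)) fun v => ddpAux n (D.deleteVert v)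
    else
      D.fragments.sup fun R => ddpAux n (D.induce R)

/-- The DAG-depth of a digraph. -/
def ddp (D : FinDigraph α) : ℕ := ddpAux D.verts.card D

/-- A DAG: a (finite) digraph with no directed cycles. -/
def IsDag (P : FinDigraph α) : Prop := ∀ v, ¬ Relation.TransGen P.Adj v v

/-- A root of a DAG: a vertex of indegree zero. -/
def IsRoot (P : FinDigraph α) (r : α) : Prop := r ∈ P.verts ∧ ∀ u, ¬ P.Adj u r

/-- `y` is a descendant of `x`: there is a (possibly trivial) directed path from `x` to `y`. -/
def Desc (P : FinDigraph α) (x y : α) : Prop := Relation.ReflTransGen P.Adj x y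

/-- `l` is a directed path in `P` starting at a root of `P` and ending at `v`. -/
def IsRootPath (P : FinDigraph α) (l : List α) (v : α) : Prop :=
  l ≠ [] ∧ l.Chain' P.Adj ∧ (∀ x ∈ l, x ∈ P.verts) ∧
  (∃ r, l.head? = some r ∧ P.IsRoot r) ∧ l.getLast? = some v

/-- The depth of a DAG: the maximum number of vertices on a directed path. -/
def depth (P : FinDigraph α) : ℕ :=
  sSup {n : ℕ | ∃ l : List α, l.Chain' P.Adj ∧ (∀ x ∈ l, x ∈ P.verts) ∧ l.length = n}

/-- The Neighbor cover condition for a DAG-depth decomposition `(P, org)` of `D`. -/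
def NeighborCover (D : FinDigraph α) (P : FinDigraph β) (org : β → α) : Prop :=
  ∀ v' ∈ P.verts, ∀ u, D.Adj (org v') u →
    (∃ u' ∈ P.verts, org u' = u ∧ P.Desc v' u') ∨
    (∀ l, P.IsRootPath l v' → ∃ u' ∈ l, org u' = u)

/-- `(P, org)` is a valid DAG-depth decomposition of `D`: `P` is a DAG, `org` maps
`V(P)` onto `V(D)`, and the Neighbor cover condition holds. -/
def IsValidDecomp (D : FinDigraph α) (P : FinDigraph β) (org : β → α) : Prop :=
  P.IsDag ∧ (∀ v' ∈ P.verts, org v' ∈ D.verts) ∧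
  (∀ v ∈ D.verts, ∃ v' ∈ P.verts, org v' = v) ∧
  NeighborCover D P org

end FinDigraph

namespace FinDigraph

/-- The disjoint union of a family of digraphs (on a common ambient vertex type). -/
def unionDigraph {β : Type} {p : ℕ} (P : Fin p → FinDigraph β) : FinDigraph β where
  verts := Finset.univ.biUnion fun i => (P i).verts
  Adj u v := ∃ i, (P i).Adj u v
  adj_mem := by
    rintro u v ⟨i, h⟩
    exact ⟨Finset.mem_biUnion.mpr ⟨i, Finset.mem_univ _, ((P i).adj_mem u v h).1⟩,
      Finset.mem_biUnion.mpr ⟨i, Finset.mem_univ _, ((P i).adj_mem u v h).2⟩⟩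

end FinDigraph

/-!
Edges of `D` never leave a reachable fragment, and edges of the disjoint union never leave a
component `P i`. Hence every directed path of the union, in particular every root path, lies
inside a single `P i`, so acyclicity, the neighbour cover condition and the depth all transfer
componentwise; surjectivity holds because every vertex of `D` lies in some fragment.
-/

namespace FinDigraph

variable {α β : Type}

section Fragments

variable {D : FinDigraph α}

@[simp]
lemma mem_reachSet {s v : α} :
    v ∈ D.reachSet s ↔ v ∈ D.verts ∧ Relation.ReflTransGen D.Adj s v :=
  Finset.mem_filter

lemma IsFragment.mem_of_adj {R : Finset α} (hR : D.IsFragment R) {x u : α} (hx : x ∈ R)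
    (hxu : D.Adj x u) : u ∈ R := by
  obtain ⟨⟨s, -, rfl⟩, -⟩ := hR
  exact mem_reachSet.2 ⟨(D.adj_mem x u hxu).2, (mem_reachSet.1 hx).2.tail hxu⟩

lemma exists_isFragment_mem {v : α} (hv : v ∈ D.verts) : ∃ R, D.IsFragment R ∧ v ∈ R := by
  -- a source `s` whose reach set contains that of `v` and has maximal size
  let T := D.verts.filter fun s => D.reachSet v ⊆ D.reachSet s
  have hvT : v ∈ T := Finset.mem_filter.2 ⟨hv, subset_rfl⟩
  obtain ⟨s, hsT, hmax⟩ := T.exists_max_image (fun s => (D.reachSet s).card) ⟨v, hvT⟩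
  obtain ⟨hs, hvs⟩ := Finset.mem_filter.1 hsT
  refine ⟨D.reachSet s, ⟨⟨s, hs, rfl⟩, fun t ht hst => ?_⟩,
    hvs (mem_reachSet.2 ⟨hv, .refl⟩)⟩
  exact Finset.eq_of_subset_of_card_le hst (hmax t (Finset.mem_filter.2 ⟨ht, hvs.trans hst⟩))

end Fragments

section Decompositions

variable {D : FinDigraph α} {Q : FinDigraph β} {org org' : β → α}

lemma IsRootPath.mem_verts {l : List β} {v : β} (hl : Q.IsRootPath l v) : v ∈ Q.verts :=
  hl.2.2.1 v (List.mem_of_getLast? hl.2.2.2.2)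

lemma NeighborCover.congr (h : NeighborCover D Q org) (horg : ∀ x ∈ Q.verts, org x = org' x) :
    NeighborCover D Q org' := by
  intro v' hv' u hu
  rw [← horg v' hv'] at hu
  rcases h v' hv' u hu with ⟨u', hu', rfl, hdesc⟩ | hpaths
  · exact .inl ⟨u', hu', (horg u' hu').symm, hdesc⟩
  · refine .inr fun l hl => ?_
    obtain ⟨u', hu'l, rfl⟩ := hpaths l hl
    exact ⟨u', hu'l, (horg u' (hl.2.2.1 u' hu'l)).symm⟩

lemma IsValidDecomp.congr (h : IsValidDecomp D Q org) (horg : ∀ x ∈ Q.verts, org x = org' x) :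
    IsValidDecomp D Q org' := by
  obtain ⟨hdag, hinto, hsurj, hcover⟩ := h
  refine ⟨hdag, fun v' hv' => horg v' hv' ▸ hinto v' hv', fun v hv => ?_, hcover.congr horg⟩
  obtain ⟨v', hv', rfl⟩ := hsurj v hv
  exact ⟨v', hv', (horg v' hv').symm⟩

lemma NeighborCover.of_induce {S : Finset α} (h : NeighborCover (D.induce S) Q org)
    (hS : ∀ x ∈ S, ∀ u, D.Adj x u → u ∈ S) (horg : ∀ v' ∈ Q.verts, org v' ∈ S) :
    NeighborCover D Q org :=
  fun v' hv' u hu => h v' hv' u ⟨hu, horg v' hv', hS _ (horg v' hv') u hu⟩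

lemma length_le_card_verts (hdag : Q.IsDag) {l : List β} (hch : l.IsChain Q.Adj)
    (hm : ∀ x ∈ l, x ∈ Q.verts) : l.length ≤ Q.verts.card := by
  have : IsTrans β (Relation.TransGen Q.Adj) := ⟨fun _ _ _ => .trans⟩
  have hpw : l.Pairwise (Relation.TransGen Q.Adj) :=
    List.isChain_iff_pairwise.mp (hch.imp fun _ _ => .single)
  have hnd : l.Nodup :=
    hpw.imp fun {a b} (h : Relation.TransGen Q.Adj a b) (heq : a = b) => hdag a (heq ▸ h)
  calc l.length = l.toFinset.card := (List.toFinset_card_of_nodup hnd).symm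
    _ ≤ Q.verts.card := Finset.card_le_card fun x hx => hm x (List.mem_toFinset.mp hx)

lemma length_le_depth (hdag : Q.IsDag) {l : List β} (hch : l.IsChain Q.Adj)
    (hm : ∀ x ∈ l, x ∈ Q.verts) : l.length ≤ Q.depth := by
  refine le_csSup ⟨Q.verts.card, ?_⟩ ⟨l, hch, hm, rfl⟩
  rintro _ ⟨l, hch, hm, rfl⟩
  exact length_le_card_verts hdag hch hm

lemma depth_le {n : ℕ}
    (h : ∀ l : List β, l.IsChain Q.Adj → (∀ x ∈ l, x ∈ Q.verts) → l.length ≤ n) :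
    Q.depth ≤ n := by
  refine csSup_le ⟨0, [], List.isChain_nil, by simp, rfl⟩ ?_
  rintro _ ⟨l, hch, hm, rfl⟩
  exact h l hch hm

end Decompositions

section Union

variable {p : ℕ} {P : Fin p → FinDigraph β}

@[simp]
lemma mem_unionDigraph_verts {x : β} :
    x ∈ (unionDigraph P).verts ↔ ∃ i, x ∈ (P i).verts := by
  simp [unionDigraph]

variable (hdisj : Pairwise fun i j => Disjoint (P i).verts (P j).verts)
include hdisj

lemma eq_of_mem_verts {i j : Fin p} {x : β} (hi : x ∈ (P i).verts) (hj : x ∈ (P j).verts) :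
    i = j :=
  hdisj.eq (Finset.not_disjoint_iff.2 ⟨x, hi, hj⟩)

lemma adj_of_unionDigraph_adj {i : Fin p} {x y : β} (h : (unionDigraph P).Adj x y)
    (hx : x ∈ (P i).verts) : (P i).Adj x y := by
  obtain ⟨j, hj⟩ := h
  obtain rfl := eq_of_mem_verts hdisj hx ((P j).adj_mem x y hj).1
  exact hj

lemma transGen_of_unionDigraph {i : Fin p} {x y : β}
    (h : Relation.TransGen (unionDigraph P).Adj x y) (hx : x ∈ (P i).verts) :
    Relation.TransGen (P i).Adj x y := by
  induction h using Relation.TransGen.head_induction_on with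
  | single h => exact .single (adj_of_unionDigraph_adj hdisj h hx)
  | head h _ ih =>
    have hxz := adj_of_unionDigraph_adj hdisj h hx
    exact .head hxz (ih ((P i).adj_mem _ _ hxz).2)

lemma isDag_unionDigraph (hdag : ∀ i, (P i).IsDag) : (unionDigraph P).IsDag := by
  intro v hv
  obtain ⟨w, ⟨i, hvw⟩, -⟩ := Relation.TransGen.head'_iff.1 hv
  have hvi : v ∈ (P i).verts := ((P i).adj_mem v w hvw).1
  exact hdag i v (transGen_of_unionDigraph hdisj hv hvi)

lemma isChain_of_unionDigraph {i : Fin p} {a : β} {l : List β}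
    (hch : (a :: l).IsChain (unionDigraph P).Adj) (ha : a ∈ (P i).verts) :
    (a :: l).IsChain (P i).Adj ∧ ∀ x ∈ a :: l, x ∈ (P i).verts := by
  have hmem : ∀ x ∈ a :: l, x ∈ (P i).verts := by
    refine List.forall_mem_cons.2 ⟨ha, hch.cons_induction _ _ (fun x y hxy hx => ?_) ha⟩
    exact ((P i).adj_mem x y (adj_of_unionDigraph_adj hdisj hxy hx)).2
  exact ⟨hch.imp_of_mem_imp fun x _ hx _ hxy => adj_of_unionDigraph_adj hdisj hxy (hmem x hx),
    hmem⟩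

lemma IsRootPath.of_unionDigraph {l : List β} {v : β} (hl : (unionDigraph P).IsRootPath l v) :
    ∃ i, (P i).IsRootPath l v := by
  obtain ⟨hne, hch, -, ⟨r, hr, hroot⟩, hlast⟩ := hl
  obtain ⟨t, rfl⟩ : ∃ t, l = r :: t := by
    cases l with
    | nil => exact absurd rfl hne
    | cons a t => exact ⟨t, by simp_all⟩
  obtain ⟨i, hri⟩ := mem_unionDigraph_verts.1 hroot.1
  obtain ⟨hch', hmem⟩ := isChain_of_unionDigraph hdisj hch hri
  exact ⟨i, hne, hch', hmem, ⟨r, hr, hri, fun u hu => hroot.2 u ⟨i, hu⟩⟩, hlast⟩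

lemma neighborCover_unionDigraph {D : FinDigraph α} {org : β → α}
    (hcover : ∀ i, NeighborCover D (P i) org) : NeighborCover D (unionDigraph P) org := by
  intro v' hv' u hu
  obtain ⟨i, hi⟩ := mem_unionDigraph_verts.1 hv'
  rcases hcover i v' hi u hu with ⟨u', hu', horg, hdesc⟩ | hpaths
  · exact .inl ⟨u', mem_unionDigraph_verts.2 ⟨i, hu'⟩, horg,
      Relation.ReflTransGen.mono (fun _ _ h => ⟨i, h⟩) _ _ hdesc⟩
  · refine .inr fun l hl => ?_
    obtain ⟨j, hj⟩ := hl.of_unionDigraph hdisj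
    obtain rfl := eq_of_mem_verts hdisj hi hj.mem_verts
    exact hpaths l hj

lemma depth_unionDigraph (hdag : ∀ i, (P i).IsDag) :
    (unionDigraph P).depth = Finset.univ.sup fun i => (P i).depth := by
  refine le_antisymm (depth_le fun l hch hm => ?_) (Finset.sup_le fun i _ => depth_le ?_)
  · cases l with
    | nil => exact Nat.zero_le _
    | cons a t =>
      obtain ⟨i, ha⟩ := mem_unionDigraph_verts.1 (hm a List.mem_cons_self)
      obtain ⟨hch', hm'⟩ := isChain_of_unionDigraph hdisj hch ha
      exact (length_le_depth (hdag i) hch' hm').trans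
        (Finset.le_sup (f := fun i => (P i).depth) (Finset.mem_univ i))
  · intro l hch hm
    exact length_le_depth (isDag_unionDigraph hdisj hdag) (hch.imp fun _ _ h => ⟨i, h⟩)
      fun x hx => mem_unionDigraph_verts.2 ⟨i, hm x hx⟩

end Union

end FinDigraph

open FinDigraph in
theorem disjoint_union_of_fragment_decomps_general {α β : Type} (D : FinDigraph α)
    (p : ℕ)
    (R : Fin p → Finset α)
    (hR : ∀ F : Finset α, D.IsFragment F ↔ ∃ i, F = R i)
    (P : Fin p → FinDigraph β) (orgs : Fin p → β → α)
    (hdisj : ∀ i j, i ≠ j → Disjoint (P i).verts (P j).verts)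
    (hvalid : ∀ i, IsValidDecomp (D.induce (R i)) (P i) (orgs i))
    (d : Fin p → ℕ) (hd : ∀ i, depth (P i) = d i)
    (org : β → α) (horg : ∀ i, ∀ x ∈ (P i).verts, org x = orgs i x) :
    IsValidDecomp D (unionDigraph P) org ∧
      depth (unionDigraph P) = Finset.univ.sup d := by
  have hvalid' i : IsValidDecomp (D.induce (R i)) (P i) org :=
    (hvalid i).congr fun x hx => (horg i x hx).symm
  have hinto i : ∀ v' ∈ (P i).verts, org v' ∈ D.verts ∩ R i := (hvalid' i).2.1
  have hcover i : NeighborCover D (P i) org :=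
    (hvalid' i).2.2.2.of_induce (fun _ hx _ hu => ((hR _).2 ⟨i, rfl⟩).mem_of_adj hx hu)
      fun v' hv' => (Finset.mem_inter.1 (hinto i v' hv')).2
  have hdag i : (P i).IsDag := (hvalid i).1
  refine ⟨⟨isDag_unionDigraph hdisj hdag, fun v' hv' => ?_, fun v hv => ?_,
    neighborCover_unionDigraph hdisj hcover⟩, ?_⟩
  · obtain ⟨i, hi⟩ := mem_unionDigraph_verts.1 hv'
    exact (Finset.mem_inter.1 (hinto i v' hi)).1
  · obtain ⟨F, hF, hvF⟩ := exists_isFragment_mem hv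
    obtain ⟨i, rfl⟩ := (hR F).1 hF
    obtain ⟨v', hv', rfl⟩ := (hvalid' i).2.2.1 v (Finset.mem_inter.2 ⟨hv, hvF⟩)
    exact ⟨v', mem_unionDigraph_verts.2 ⟨i, hv'⟩, rfl⟩
  · simp only [depth_unionDigraph hdisj hdag, hd]

open FinDigraph in
/-- If `R 0, …, R (p-1)` are (all) the reachable fragments of a nonempty digraph `D`
and `(P i, orgs i)` is a valid DAG-depth decomposition of `D[R i]` of depth `d i`,
with the `P i` pairwise disjoint, then the disjoint union of the `P i` together with
the common extension `org` of the `orgs i` is a valid DAG-depth decomposition of `D`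
of depth `max_i (d i)`. -/
theorem disjoint_union_of_fragment_decomps {α β : Type} (D : FinDigraph α)
    (hne : D.verts.Nonempty) (p : ℕ) (hp : 1 ≤ p)
    (R : Fin p → Finset α) (hRinj : Function.Injective R)
    (hR : ∀ F : Finset α, D.IsFragment F ↔ ∃ i, F = R i)
    (P : Fin p → FinDigraph β) (orgs : Fin p → β → α)
    (hdisj : ∀ i j, i ≠ j → Disjoint (P i).verts (P j).verts)
    (hvalid : ∀ i, IsValidDecomp (D.induce (R i)) (P i) (orgs i))
    (d : Fin p → ℕ) (hd : ∀ i, depth (P i) = d i)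
    (org : β → α) (horg : ∀ i, ∀ x ∈ (P i).verts, org x = orgs i x) :
    IsValidDecomp D (unionDigraph P) org ∧
      depth (unionDigraph P) = Finset.univ.sup d :=
  disjoint_union_of_fragment_decomps_general D p R hR P orgs hdisj hvalid d hd org horg
end
end

section
/- Let D be a finite digraph with |V(D)| > 1 having exactly one reachable fragment (equal to V(D)), let v ∈ V(D), and let (P', org') be a valid DAG-depth decomposition of D − v of depth d. Let P be the DAG obtained from P' by adding one new vertex r with an edge from r to every root of P', and extend org' to org by setting org(r) = v. Then (P, org) is a valid DAG-depth decomposition of D of depth d + 1. -/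
open scoped Classical

noncomputable section

namespace FinDigraph

/-- The DAG obtained from `P'` by adding one new vertex `r` with an edge from `r`
to every root of `P'`. -/
def addRoot {β : Type} [DecidableEq β] (P' : FinDigraph β) (r : β) : FinDigraph β where
  verts := insert r P'.verts
  Adj u v := P'.Adj u v ∨ (u = r ∧ P'.IsRoot v)
  adj_mem := by
    rintro u v (h | ⟨rfl, hv⟩)
    · exact ⟨Finset.mem_insert_of_mem (P'.adj_mem u v h).1,
        Finset.mem_insert_of_mem (P'.adj_mem u v h).2⟩
    · exact ⟨Finset.mem_insert_self _ _, Finset.mem_insert_of_mem hv.1⟩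

end FinDigraph


/-!
The new vertex `r` is the only root of `P'.addRoot r`, and every vertex of `P'` descends from
it because every vertex of a finite DAG descends from a root. Hence an out-neighbour of
`v = org r` is always found below `r`, while `v` as an out-neighbour of any other vertex lies
on every root path, which starts at `r`. Every other edge lies in `D − v`, and root paths of
`P'.addRoot r` are `r` followed by root paths of `P'`, so the cover condition of `P'` carries
over. For the depth: a longest path of `P'` starts at a root (or is empty), so it extends by
`r`, and dropping the first vertex of any path of `P'.addRoot r` leaves a path of `P'`.
-/

namespace List

theorem IsChain.exists_rel_of_mem_tail {α : Type*} {R : α → α → Prop} {b : α} :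
    ∀ {l : List α}, IsChain R l → b ∈ l.tail → ∃ a, R a b
  | [], _, hb | [_], _, hb => by simp at hb
  | a :: c :: l, h, hb => by
    rcases mem_cons.mp hb with rfl | hb
    · exact ⟨a, (isChain_cons_cons.mp h).1⟩
    · exact exists_rel_of_mem_tail (isChain_cons_cons.mp h).2 hb

end List

namespace FinDigraph

section Paths

variable {β : Type} {P : FinDigraph β}

def IsPath (P : FinDigraph β) (l : List β) : Prop :=
  l.IsChain P.Adj ∧ ∀ x ∈ l, x ∈ P.verts

theorem IsDag.nodup_of_isChain (hP : P.IsDag) {l : List β} (hl : l.IsChain P.Adj) : l.Nodup :=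
  have : Trans (Relation.TransGen P.Adj) (Relation.TransGen P.Adj) (Relation.TransGen P.Adj) :=
    ⟨Relation.TransGen.trans⟩
  (List.isChain_iff_pairwise.mp (hl.imp fun _ _ => Relation.TransGen.single)).imp
    fun hab hEq => by subst hEq; exact hP _ hab

theorem IsDag.length_le_card (hP : P.IsDag) {l : List β} (hl : P.IsPath l) :
    l.length ≤ P.verts.card :=
  ((hP.nodup_of_isChain hl.1).subperm fun x hx => Finset.mem_toList.mpr (hl.2 x hx)).length_le
    |>.trans_eq P.verts.length_toList

theorem IsDag.exists_longest_path (hP : P.IsDag) :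
    ∃ l, P.IsPath l ∧ ∀ l', P.IsPath l' → l'.length ≤ l.length := by
  set S := {n | ∃ l, P.IsPath l ∧ l.length = n}
  have hbdd : BddAbove S := ⟨P.verts.card, by rintro _ ⟨l, hl, rfl⟩; exact hP.length_le_card hl⟩
  obtain ⟨l, hl, hlen⟩ := Nat.sSup_mem (s := S) ⟨0, [], ⟨.nil, by simp⟩, rfl⟩ hbdd
  exact ⟨l, hl, fun l' hl' => hlen ▸ le_csSup hbdd ⟨l', hl', rfl⟩⟩

theorem depth_eq_of_longest_path {l : List β} (hl : P.IsPath l)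
    (hmax : ∀ l', P.IsPath l' → l'.length ≤ l.length) : depth P = l.length :=
  IsGreatest.csSup_eq ⟨⟨l, hl.1, hl.2, rfl⟩, fun _ ⟨l', h₁, h₂, hlen⟩ => hlen ▸ hmax l' ⟨h₁, h₂⟩⟩

theorem IsPath.isRoot_of_longest {l : List β} (hl : P.IsPath l)
    (hmax : ∀ l', P.IsPath l' → l'.length ≤ l.length) : ∀ a ∈ l.head?, P.IsRoot a := by
  rintro a ha
  obtain ⟨t, rfl⟩ : ∃ t, l = a :: t := ⟨_, List.eq_cons_of_mem_head? ha⟩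
  refine ⟨hl.2 a (by simp), fun u hu => ?_⟩
  have hlonger : P.IsPath (u :: a :: t) :=
    ⟨hl.1.cons_cons hu, by simpa [(P.adj_mem u a hu).1] using hl.2⟩
  simpa using hmax _ hlonger

theorem IsDag.exists_isRoot_reflTransGen (hP : P.IsDag) {x : β} (hx : x ∈ P.verts) :
    ∃ w, P.IsRoot w ∧ Relation.ReflTransGen P.Adj w x := by
  have : IsStrictOrder β (Relation.TransGen P.Adj) :=
    { irrefl := hP, trans := fun _ _ _ => Relation.TransGen.trans }
  have hwf := Set.wellFoundedOn_iff.mp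
    (P.verts.finite_toSet.wellFoundedOn (r := Relation.TransGen P.Adj))
  obtain ⟨w, ⟨hw, hwx⟩, hmin⟩ :=
    hwf.has_min {w | w ∈ P.verts ∧ Relation.ReflTransGen P.Adj w x} ⟨x, hx, .refl⟩
  refine ⟨w, ⟨hw, fun u huw => ?_⟩, hwx⟩
  have hu := (P.adj_mem u w huw).1
  exact hmin u ⟨hu, hwx.head huw⟩ ⟨.single huw, hu, hw⟩

end Paths

section AddRoot

variable {β : Type} [DecidableEq β] {P : FinDigraph β} {r a b : β}

theorem mem_verts_of_addRoot_adj (h : (P.addRoot r).Adj a b) : b ∈ P.verts := by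
  rcases h with h | ⟨-, h⟩
  exacts [(P.adj_mem a b h).2, h.1]

theorem addRoot_adj_iff_of_mem (hr : r ∉ P.verts) (ha : a ∈ P.verts) :
    (P.addRoot r).Adj a b ↔ P.Adj a b :=
  ⟨fun h => h.resolve_right fun ⟨har, _⟩ => hr (har ▸ ha), .inl⟩

theorem addRoot_adj_self_iff (hr : r ∉ P.verts) : (P.addRoot r).Adj r b ↔ P.IsRoot b :=
  ⟨fun h => (h.resolve_left fun h => hr (P.adj_mem r b h).1).2, fun h => .inr ⟨rfl, h⟩⟩

theorem isRoot_addRoot_iff (hr : r ∉ P.verts) {w : β} : (P.addRoot r).IsRoot w ↔ w = r := by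
  refine ⟨fun ⟨hw, hnot⟩ => ?_, ?_⟩
  · refine (Finset.mem_insert.mp hw).resolve_right fun hw => ?_
    by_cases hroot : P.IsRoot w
    · exact hnot r (.inr ⟨rfl, hroot⟩)
    · obtain ⟨u, hu⟩ : ∃ u, P.Adj u w := by simpa [IsRoot, hw] using hroot
      exact hnot u (.inl hu)
  · rintro rfl
    exact ⟨Finset.mem_insert_self _ _, fun u hu => hr (mem_verts_of_addRoot_adj hu)⟩

theorem transGen_of_addRoot (hr : r ∉ P.verts) (h : Relation.TransGen (P.addRoot r).Adj a b)
    (ha : a ∈ P.verts) : Relation.TransGen P.Adj a b := by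
  induction h using Relation.TransGen.head_induction_on with
  | single hab => exact .single ((addRoot_adj_iff_of_mem hr ha).mp hab)
  | head hac _ ih =>
    have hac := (addRoot_adj_iff_of_mem hr ha).mp hac
    exact .head hac (ih (P.adj_mem _ _ hac).2)

theorem IsDag.addRoot (hP : P.IsDag) (hr : r ∉ P.verts) : (P.addRoot r).IsDag := fun w hw =>
  have ⟨_, _, hcw⟩ := Relation.TransGen.tail'_iff.mp hw
  hP w (transGen_of_addRoot hr hw (mem_verts_of_addRoot_adj hcw))

theorem IsDag.desc_addRoot (hP : P.IsDag) {x : β} (hx : x ∈ P.verts) :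
    (P.addRoot r).Desc r x :=
  have ⟨_, hw, hwx⟩ := hP.exists_isRoot_reflTransGen hx
  .head (.inr ⟨rfl, hw⟩) (Relation.ReflTransGen.mono (fun _ _ => .inl) _ _ hwx)

theorem IsPath.tail_of_addRoot (hr : r ∉ P.verts) {l : List β} (hl : (P.addRoot r).IsPath l) :
    P.IsPath l.tail := by
  have hmem : ∀ x ∈ l.tail, x ∈ P.verts := fun x hx =>
    have ⟨_, hax⟩ := hl.1.exists_rel_of_mem_tail hx
    mem_verts_of_addRoot_adj hax
  exact ⟨hl.1.tail.imp_of_mem_imp fun a _ ha _ =>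
    (addRoot_adj_iff_of_mem hr (hmem a ha)).mp, hmem⟩

theorem IsPath.cons_addRoot {l : List β} (hl : P.IsPath l)
    (hroot : ∀ a ∈ l.head?, P.IsRoot a) : (P.addRoot r).IsPath (r :: l) := by
  refine ⟨?_, List.forall_mem_cons.mpr
    ⟨Finset.mem_insert_self r _, fun x hx => Finset.mem_insert_of_mem (hl.2 x hx)⟩⟩
  cases l with
  | nil => exact .singleton r
  | cons a t => exact (hl.1.imp fun _ _ => .inl).cons_cons (.inr ⟨rfl, hroot a rfl⟩)

theorem IsDag.depth_addRoot (hP : P.IsDag) (hr : r ∉ P.verts) :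
    depth (P.addRoot r) = depth P + 1 := by
  obtain ⟨l, hl, hmax⟩ := hP.exists_longest_path
  rw [depth_eq_of_longest_path hl hmax]
  refine depth_eq_of_longest_path (hl.cons_addRoot (hl.isRoot_of_longest hmax)) fun l' hl' => ?_
  have := hmax _ (hl'.tail_of_addRoot hr)
  simp only [List.length_tail, List.length_cons] at this ⊢
  omega

theorem IsRootPath.eq_cons_of_addRoot (hr : r ∉ P.verts) {l : List β} {x : β}
    (hl : (P.addRoot r).IsRootPath l x) : l = r :: l.tail :=
  have ⟨_, _, _, ⟨_, hhead, hroot⟩, _⟩ := hl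
  List.eq_cons_of_mem_head? ((isRoot_addRoot_iff hr).mp hroot ▸ hhead)

theorem IsRootPath.tail_of_addRoot (hr : r ∉ P.verts) {l : List β} {x : β}
    (hl : (P.addRoot r).IsRootPath l x) (hx : x ≠ r) : P.IsRootPath l.tail x := by
  obtain ⟨t, rfl⟩ : ∃ t, l = r :: t := ⟨_, hl.eq_cons_of_addRoot hr⟩
  obtain ⟨-, hchain, hmem, -, hlast⟩ := hl
  obtain ⟨hchain', hmem'⟩ := IsPath.tail_of_addRoot hr ⟨hchain, hmem⟩
  cases t with
  | nil => exact absurd (by simpa using hlast) hx.symm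
  | cons b t =>
    have hb := (addRoot_adj_self_iff hr).mp (List.isChain_cons_cons.mp hchain).1
    exact ⟨List.cons_ne_nil b t, hchain', hmem', ⟨b, rfl, hb⟩, by simpa using hlast⟩

end AddRoot

section Decomp

variable {α β : Type} [DecidableEq β] {D : FinDigraph α} {v : α}

theorem mem_deleteVert_verts {u : α} : u ∈ (D.deleteVert v).verts ↔ u ∈ D.verts ∧ u ≠ v := by
  simp only [deleteVert, induce, Finset.mem_inter, Finset.mem_erase]
  tauto

theorem deleteVert_adj {a b : α} : (D.deleteVert v).Adj a b ↔ D.Adj a b ∧ a ≠ v ∧ b ≠ v := by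
  simp only [deleteVert, induce, Finset.mem_erase]
  have := D.adj_mem a b
  tauto

variable {P : FinDigraph β} {org' org : β → α} {r : β}

theorem NeighborCover.addRoot (h : IsValidDecomp (D.deleteVert v) P org') (hr : r ∉ P.verts)
    (horgr : org r = v) (horg : ∀ x ∈ P.verts, org x = org' x) :
    NeighborCover D (P.addRoot r) org := by
  obtain ⟨hP, hmaps, hsurj, hcover⟩ := h
  intro x hx u hxu
  by_cases huv : u = v
  · subst huv
    rcases Finset.mem_insert.mp hx with rfl | hx
    · exact .inl ⟨x, hx, horgr, .refl⟩
    · exact .inr fun l hl => ⟨r, hl.eq_cons_of_addRoot hr ▸ List.mem_cons_self, horgr⟩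
  rcases Finset.mem_insert.mp hx with rfl | hx
  · obtain ⟨u', hu', rfl⟩ :=
      hsurj u (mem_deleteVert_verts.mpr ⟨(D.adj_mem _ u hxu).2, huv⟩)
    exact .inl ⟨u', Finset.mem_insert_of_mem hu', horg u' hu', hP.desc_addRoot hu'⟩
  rw [horg x hx] at hxu
  have hxv := (mem_deleteVert_verts.mp (hmaps x hx)).2
  rcases hcover x hx u (deleteVert_adj.mpr ⟨hxu, hxv, huv⟩) with ⟨u', hu', rfl, hdesc⟩ | hpaths
  · exact .inl ⟨u', Finset.mem_insert_of_mem hu', horg u' hu',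
      Relation.ReflTransGen.mono (fun _ _ => .inl) _ _ hdesc⟩
  · refine .inr fun l hl => ?_
    have hxr : x ≠ r := fun h => hr (h ▸ hx)
    have htail := hl.tail_of_addRoot hr hxr
    obtain ⟨u', hu', rfl⟩ := hpaths l.tail htail
    exact ⟨u', List.mem_of_mem_tail hu', horg u' (htail.2.2.1 u' hu')⟩

theorem IsValidDecomp.addRoot (h : IsValidDecomp (D.deleteVert v) P org') (hv : v ∈ D.verts)
    (hr : r ∉ P.verts) (horgr : org r = v) (horg : ∀ x ∈ P.verts, org x = org' x) :
    IsValidDecomp D (P.addRoot r) org := by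
  refine ⟨h.1.addRoot hr, fun x hx => ?_, fun u hu => ?_, .addRoot h hr horgr horg⟩
  · rcases Finset.mem_insert.mp hx with rfl | hx
    · exact horgr ▸ hv
    · exact horg x hx ▸ (mem_deleteVert_verts.mp (h.2.1 x hx)).1
  · by_cases huv : u = v
    · exact ⟨r, Finset.mem_insert_self r P.verts, horgr.trans huv.symm⟩
    · obtain ⟨u', hu', rfl⟩ := h.2.2.1 u (mem_deleteVert_verts.mpr ⟨hu, huv⟩)
      exact ⟨u', Finset.mem_insert_of_mem hu', horg u' hu'⟩

end Decomp

end FinDigraph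

open FinDigraph in
theorem add_root_decomp_general {α β : Type} [DecidableEq β] (D : FinDigraph α)
    (v : α) (hv : v ∈ D.verts)
    (P' : FinDigraph β) (org' : β → α)
    (hvalid : IsValidDecomp (D.deleteVert v) P' org')
    (d : ℕ) (hd : depth P' = d)
    (r : β) (hr : r ∉ P'.verts)
    (org : β → α) (horgr : org r = v) (horg : ∀ x ∈ P'.verts, org x = org' x) :
    IsValidDecomp D (P'.addRoot r) org ∧ depth (P'.addRoot r) = d + 1 :=
  ⟨hvalid.addRoot hv hr horgr horg, hd ▸ hvalid.1.depth_addRoot hr⟩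

open FinDigraph in
/-- Let `D` be a digraph with more than one vertex having exactly one reachable
fragment, equal to `V(D)`; let `v ∈ V(D)` and let `(P', org')` be a valid DAG-depth
decomposition of `D − v` of depth `d`.  Adding a new vertex `r` joined to every root
of `P'`, with `org r = v` and `org` agreeing with `org'` elsewhere, yields a valid
DAG-depth decomposition of `D` of depth `d + 1`. -/
theorem add_root_decomp {α β : Type} [DecidableEq β] (D : FinDigraph α)
    (hcard : 1 < D.verts.card)
    (hfrag : D.fragments = {D.verts})
    (v : α) (hv : v ∈ D.verts)
    (P' : FinDigraph β) (org' : β → α)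
    (hvalid : IsValidDecomp (D.deleteVert v) P' org')
    (d : ℕ) (hd : depth P' = d)
    (r : β) (hr : r ∉ P'.verts)
    (org : β → α) (horgr : org r = v) (horg : ∀ x ∈ P'.verts, org x = org' x) :
    IsValidDecomp D (P'.addRoot r) org ∧ depth (P'.addRoot r) = d + 1 :=
  add_root_decomp_general D v hv P' org' hvalid d hd r hr org horgr horg
end
end

section
/- For every n ≥ 1, the digraph D_n satisfies ddp(D_n) = n. -/
open scoped Classical

noncomputable section

namespace FinDigraph

/-- The digraph `Dn n` with vertices `a_1, …, a_n, b_1, …, b_n`, where `a_i = (i, false)`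
and `b_i = (i, true)`, and edges `(x_i, y_j)` for all `1 ≤ i < j ≤ n` and all choices
`x, y ∈ {a, b}`. -/
def Dn (n : ℕ) : FinDigraph (ℕ × Bool) where
  verts := Finset.Icc 1 n ×ˢ Finset.univ
  Adj u v := 1 ≤ u.1 ∧ u.1 < v.1 ∧ v.1 ≤ n
  adj_mem := by
    intro u v h
    simp only [Finset.mem_product, Finset.mem_Icc, Finset.mem_univ, and_true]
    omega

end FinDigraph

/-! Every induced subdigraph of `Dn n` is again a sequence of independent levels, each joined to
all later ones, and the DAG-depth of such a digraph is its number of levels. By induction on the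
number of vertices: the fragments are the sets reachable from the vertices of the lowest level.
If that level is a single vertex, it is the only fragment; deleting that vertex removes one
level and no deletion removes more. If the lowest level has several vertices, each fragment is
a proper subset that still meets every level. -/

namespace FinDigraph

variable {α : Type} {D : FinDigraph α}

lemma induce_verts_of_subset {S : Finset α} (h : S ⊆ D.verts) : (D.induce S).verts = S :=
  Finset.inter_eq_right.mpr h

lemma deleteVert_verts (v : α) : (D.deleteVert v).verts = D.verts.erase v :=
  induce_verts_of_subset (D.verts.erase_subset v)

lemma card_deleteVert {v : α} (hv : v ∈ D.verts) :
    (D.deleteVert v).verts.card = D.verts.card - 1 := by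
  rw [deleteVert_verts, Finset.card_erase_of_mem hv]

lemma reachSet_subset (s : α) : D.reachSet s ⊆ D.verts :=
  Finset.filter_subset _ _

lemma mem_reachSet_self {s : α} (hs : s ∈ D.verts) : s ∈ D.reachSet s :=
  Finset.mem_filter.mpr ⟨hs, .refl⟩

lemma IsFragment.subset {R : Finset α} (hR : D.IsFragment R) : R ⊆ D.verts := by
  obtain ⟨⟨s, -, rfl⟩, -⟩ := hR
  exact reachSet_subset s

lemma IsFragment.nonempty {R : Finset α} (hR : D.IsFragment R) : R.Nonempty := by
  obtain ⟨⟨s, hs, rfl⟩, -⟩ := hR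
  exact ⟨s, mem_reachSet_self hs⟩

lemma mem_fragments {R : Finset α} : R ∈ D.fragments ↔ D.IsFragment R :=
  ⟨fun h => (Finset.mem_filter.mp h).2,
    fun h => Finset.mem_filter.mpr ⟨Finset.mem_powerset.mpr h.subset, h⟩⟩

/-- A fragment equal to `V(D)` contains every other fragment, so by maximality it is the only
one. -/
lemma IsFragment.ssubset_verts {R : Finset α} (hR : D.IsFragment R)
    (hcard : D.fragments.card ≠ 1) : R ⊂ D.verts := by
  refine hR.subset.ssubset_of_ne fun hRV => hcard (Finset.card_eq_one.mpr ⟨R, ?_⟩)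
  refine Finset.eq_singleton_iff_unique_mem.mpr ⟨mem_fragments.mpr hR, fun R' hR' => ?_⟩
  obtain ⟨⟨s, hs, hRs⟩, -⟩ := hR
  obtain ⟨⟨s', -, rfl⟩, hmax⟩ := mem_fragments.mp hR'
  rw [hmax s hs (hRs ▸ hRV ▸ reachSet_subset s'), hRs]

/-- On the empty digraph the fuel does matter: `ddpAux 0` gives `0`, any positive fuel `1`. -/
lemma ddpAux_eq_of_card_le {m k : ℕ} (hne : D.verts.Nonempty)
    (hm : D.verts.card ≤ m) (hk : D.verts.card ≤ k) : ddpAux m D = ddpAux k D := by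
  induction m generalizing k D with
  | zero => exact absurd hne.card_pos (by omega)
  | succ m ih =>
    obtain ⟨k, rfl⟩ : ∃ k', k = k' + 1 := ⟨k - 1, by have := hne.card_pos; omega⟩
    rw [ddpAux, ddpAux]
    split_ifs with h1 hf
    · rfl
    · refine congrArg (1 + ·) (Finset.inf'_congr _ rfl fun v hv => ih ?_ ?_ ?_)
      · exact Finset.card_pos.mp (by rw [card_deleteVert hv]; omega)
      all_goals rw [card_deleteVert hv]; omega
    · refine Finset.sup_congr rfl fun R hR => ?_
      have hR := mem_fragments.mp hR
      have hRv := induce_verts_of_subset hR.subset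
      have hlt := Finset.card_lt_card (hR.ssubset_verts hf)
      refine ih ?_ ?_ ?_ <;> rw [hRv]
      exacts [hR.nonempty, by omega, by omega]

lemma ddp_of_card_eq_one (h : D.verts.card = 1) : D.ddp = 1 := by
  rw [ddp, h, ddpAux, dif_pos h.le]

lemma ddp_of_fragments_card_eq_one (h2 : 2 ≤ D.verts.card) (hf : D.fragments.card = 1) :
    D.ddp = 1 + D.verts.inf' (Finset.card_pos.mp (by omega)) fun v => (D.deleteVert v).ddp := by
  obtain ⟨k, hk⟩ : ∃ k, D.verts.card = k + 1 := ⟨D.verts.card - 1, by omega⟩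
  rw [ddp, ddpAux_eq_of_card_le (Finset.card_pos.mp (by omega)) le_rfl hk.le, ddpAux,
    dif_neg (by omega), if_pos hf]
  refine congrArg (1 + ·) (Finset.inf'_congr _ rfl fun v hv => ?_)
  rw [ddp, card_deleteVert hv, hk, Nat.add_sub_cancel]

lemma ddp_of_fragments_card_ne_one (h2 : 2 ≤ D.verts.card) (hf : D.fragments.card ≠ 1) :
    D.ddp = D.fragments.sup fun R => (D.induce R).ddp := by
  obtain ⟨k, hk⟩ : ∃ k, D.verts.card = k + 1 := ⟨D.verts.card - 1, by omega⟩
  rw [ddp, ddpAux_eq_of_card_le (Finset.card_pos.mp (by omega)) le_rfl hk.le, ddpAux,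
    dif_neg (by omega), if_neg hf]
  refine Finset.sup_congr rfl fun R hR => ?_
  have hR := mem_fragments.mp hR
  have hRv := induce_verts_of_subset hR.subset
  have hlt := Finset.card_lt_card (hR.ssubset_verts hf)
  refine ddpAux_eq_of_card_le ?_ ?_ le_rfl <;> rw [hRv]
  exacts [hR.nonempty, by omega]

def IsGradedBy {β : Type*} [LinearOrder β] (D : FinDigraph α) (ℓ : α → β) : Prop :=
  ∀ u ∈ D.verts, ∀ v ∈ D.verts, D.Adj u v ↔ ℓ u < ℓ v

namespace IsGradedBy

variable {β : Type*} [LinearOrder β] {ℓ : α → β}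

lemma induce (hD : D.IsGradedBy ℓ) (S : Finset α) : (D.induce S).IsGradedBy ℓ :=
    fun u hu v hv => by
  obtain ⟨hu, huS⟩ := Finset.mem_inter.mp hu
  obtain ⟨hv, hvS⟩ := Finset.mem_inter.mp hv
  exact (and_iff_left ⟨huS, hvS⟩).trans (hD u hu v hv)

lemma deleteVert (hD : D.IsGradedBy ℓ) (v : α) : (D.deleteVert v).IsGradedBy ℓ :=
  hD.induce _

lemma lt_of_transGen (hD : D.IsGradedBy ℓ) {u v : α} (h : Relation.TransGen D.Adj u v) :
    ℓ u < ℓ v := by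
  have lt_of_adj {a b : α} (hab : D.Adj a b) : ℓ a < ℓ b :=
    (hD a (D.adj_mem a b hab).1 b (D.adj_mem a b hab).2).mp hab
  induction h with
  | single hab => exact lt_of_adj hab
  | tail _ hbc ih => exact ih.trans (lt_of_adj hbc)

lemma mem_reachSet_iff (hD : D.IsGradedBy ℓ) {s v : α} (hs : s ∈ D.verts) :
    v ∈ D.reachSet s ↔ v ∈ D.verts ∧ (v = s ∨ ℓ s < ℓ v) := by
  rw [reachSet, Finset.mem_filter, Relation.reflTransGen_iff_eq_or_transGen]
  exact and_congr_right fun hv =>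
    or_congr_right ⟨hD.lt_of_transGen, fun h => .single ((hD s hs v hv).mpr h)⟩

lemma isFragment_reachSet (hD : D.IsGradedBy ℓ) {s : α} (hs : s ∈ D.verts)
    (hmin : ∀ v ∈ D.verts, ℓ s ≤ ℓ v) : D.IsFragment (D.reachSet s) := by
  refine ⟨⟨s, hs, rfl⟩, fun t ht hsub => ?_⟩
  obtain ⟨-, rfl | hlt⟩ := (hD.mem_reachSet_iff ht).mp (hsub (mem_reachSet_self hs))
  · rfl
  · exact absurd hlt (hmin t ht).not_gt

lemma exists_eq_reachSet_of_isFragment (hD : D.IsGradedBy ℓ) {R : Finset α}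
    (hR : D.IsFragment R) : ∃ s ∈ D.verts, (∀ v ∈ D.verts, ℓ s ≤ ℓ v) ∧ R = D.reachSet s := by
  obtain ⟨⟨s, hs, rfl⟩, hmax⟩ := hR
  obtain ⟨w, hw, hwmin⟩ := D.verts.exists_min_image ℓ ⟨s, hs⟩
  rcases (hwmin s hs).eq_or_lt with hws | hws
  · exact ⟨s, hs, hws ▸ hwmin, rfl⟩
  refine ⟨w, hw, hwmin, hmax w hw fun v hv => ?_⟩
  obtain ⟨hv, hvs⟩ := (hD.mem_reachSet_iff hs).mp hv
  refine (hD.mem_reachSet_iff hw).mpr ⟨hv, Or.inr ?_⟩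
  rcases hvs with rfl | hlt
  exacts [hws, hws.trans hlt]

lemma image_reachSet (hD : D.IsGradedBy ℓ) {s : α} (hs : s ∈ D.verts)
    (hmin : ∀ v ∈ D.verts, ℓ s ≤ ℓ v) : (D.reachSet s).image ℓ = D.verts.image ℓ := by
  refine (Finset.image_subset_image (reachSet_subset s)).antisymm fun x hx => ?_
  obtain ⟨v, hv, rfl⟩ := Finset.mem_image.mp hx
  rcases (hmin v hv).eq_or_lt with h | h
  · exact h ▸ Finset.mem_image_of_mem ℓ (mem_reachSet_self hs)
  · exact Finset.mem_image_of_mem ℓ ((hD.mem_reachSet_iff hs).mpr ⟨hv, Or.inr h⟩)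

/-- Distinct vertices of minimal level have distinct reachable sets, each a fragment. -/
lemma eq_of_fragments_card_eq_one (hD : D.IsGradedBy ℓ) (hf : D.fragments.card = 1)
    {s v : α} (hs : s ∈ D.verts) (hmin : ∀ u ∈ D.verts, ℓ s ≤ ℓ u) (hv : v ∈ D.verts)
    (hvs : ℓ v ≤ ℓ s) : v = s := by
  have hvmin : ∀ u ∈ D.verts, ℓ v ≤ ℓ u := fun u hu => hvs.trans (hmin u hu)
  have hR : D.reachSet v = D.reachSet s :=
    Finset.card_le_one.mp hf.le _ (mem_fragments.mpr (hD.isFragment_reachSet hv hvmin))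
      _ (mem_fragments.mpr (hD.isFragment_reachSet hs hmin))
  obtain ⟨-, h | h⟩ := (hD.mem_reachSet_iff hs).mp (hR ▸ mem_reachSet_self hv)
  exacts [h, absurd h hvs.not_gt]

lemma image_erase_of_fragments_card_eq_one (hD : D.IsGradedBy ℓ) (hf : D.fragments.card = 1)
    {s : α} (hs : s ∈ D.verts) (hmin : ∀ v ∈ D.verts, ℓ s ≤ ℓ v) :
    (D.verts.erase s).image ℓ = (D.verts.image ℓ).erase (ℓ s) := by
  refine subset_antisymm (fun x hx => ?_) (Finset.erase_image_subset_image_erase ℓ D.verts s)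
  obtain ⟨v, hv, rfl⟩ := Finset.mem_image.mp hx
  obtain ⟨hvs, hv⟩ := Finset.mem_erase.mp hv
  exact Finset.mem_erase.mpr ⟨fun h => hvs (hD.eq_of_fragments_card_eq_one hf hs hmin hv h.le),
    Finset.mem_image_of_mem ℓ hv⟩

theorem ddp_eq_card_image (hD : D.IsGradedBy ℓ) (hne : D.verts.Nonempty) :
    D.ddp = (D.verts.image ℓ).card := by
  induction hk : D.verts.card using Nat.strong_induction_on generalizing D with
  | _ k ih =>
  have ih' {D' : FinDigraph α} (hD' : D'.IsGradedBy ℓ) (hne' : D'.verts.Nonempty)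
      (hlt : D'.verts.card < D.verts.card) : D'.ddp = (D'.verts.image ℓ).card :=
    ih _ (hk ▸ hlt) hD' hne' rfl
  obtain ⟨s, hs, hmin⟩ := D.verts.exists_min_image ℓ hne
  have hlevels := (hne.image ℓ).card_pos
  by_cases h1 : D.verts.card ≤ 1
  · obtain ⟨a, ha⟩ := Finset.card_eq_one.mp (h1.antisymm hne.card_pos)
    rw [ddp_of_card_eq_one (by rw [ha, Finset.card_singleton]), ha, Finset.image_singleton,
      Finset.card_singleton]
  have hdel {v : α} (hv : v ∈ D.verts) :
      (D.deleteVert v).ddp = ((D.verts.erase v).image ℓ).card := by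
    rw [ih' (hD.deleteVert v) (Finset.card_pos.mp (by rw [card_deleteVert hv]; omega))
      (by rw [card_deleteVert hv]; omega), deleteVert_verts]
  by_cases hf : D.fragments.card = 1
  · rw [ddp_of_fragments_card_eq_one (by omega) hf]
    suffices D.verts.inf' _ (fun v => (D.deleteVert v).ddp) = (D.verts.image ℓ).card - 1 by
      omega
    refine le_antisymm ((Finset.inf'_le _ hs).trans ?_) (Finset.le_inf' _ _ fun v hv => ?_)
    · rw [hdel hs, hD.image_erase_of_fragments_card_eq_one hf hs hmin,
        Finset.card_erase_of_mem (Finset.mem_image_of_mem ℓ hs)]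
    · rw [hdel hv]
      exact Finset.pred_card_le_card_erase.trans
        (Finset.card_le_card (Finset.erase_image_subset_image_erase ℓ D.verts v))
  · rw [ddp_of_fragments_card_ne_one (by omega) hf]
    have hconst : ∀ R ∈ D.fragments, (D.induce R).ddp = (D.verts.image ℓ).card := by
      intro R hR
      have hR := mem_fragments.mp hR
      obtain ⟨t, ht, htmin, rfl⟩ := hD.exists_eq_reachSet_of_isFragment hR
      have hRv := induce_verts_of_subset hR.subset
      rw [ih' (hD.induce _) (by rw [hRv]; exact hR.nonempty)
        (by rw [hRv]; exact Finset.card_lt_card (hR.ssubset_verts hf)), hRv,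
        hD.image_reachSet ht htmin]
    rw [Finset.sup_congr rfl hconst, Finset.sup_const
      ⟨_, mem_fragments.mpr (hD.isFragment_reachSet hs hmin)⟩]

end IsGradedBy

lemma Dn_isGradedBy (n : ℕ) : (Dn n).IsGradedBy Prod.fst := fun u hu v hv => by
  simp only [Dn, Finset.mem_product, Finset.mem_Icc] at hu hv
  exact ⟨fun h => h.2.1, fun h => ⟨hu.1.1, h, hv.1.2⟩⟩

lemma image_fst_Dn_verts (n : ℕ) : (Dn n).verts.image Prod.fst = Finset.Icc 1 n :=
  Finset.product_image_fst Finset.univ_nonempty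

end FinDigraph

open FinDigraph in
/-- For every `n ≥ 1`, the digraph `Dn n` satisfies `ddp (Dn n) = n`. -/
theorem ddp_Dn (n : ℕ) (hn : 1 ≤ n) : ddp (Dn n) = n := by
  have hne : (Dn n).verts.Nonempty := ⟨(1, false), by simp [Dn, hn]⟩
  rw [(Dn_isGradedBy n).ddp_eq_card_image hne, image_fst_Dn_verts, Nat.card_Icc,
    Nat.add_sub_cancel]
end
end
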